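/- Let E be a Banach space with a Schauder basis. If E contains a C-subsymmetric sequence, for some constant C ≥ 1, then for any δ > 0 the space E also contains a (C + δ)-subsymmetric block sequence. -/

import Mathlib

open Filter Topology

/-- Two sequences of vectors are `c`-equivalent: the natural map between their spans
distorts norms of finite linear combinations by at most a factor `c`. -/
def SeqEquiv {E F : Type*} [NormedAddCommGroup E] [NormedSpace ℝ E]
    [NormedAddCommGroup F] [NormedSpace ℝ F]
    (c : ℝ) (x : ℕ → E) (y : ℕ → F) : Prop :=
  ∀ (s : Finset ℕ) (a : ℕ → ℝ),
    (1 / c) * ‖∑ i ∈ s, a i • x i‖ ≤ ‖∑ i ∈ s, a i • y i‖ ∧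
    ‖∑ i ∈ s, a i • y i‖ ≤ c * ‖∑ i ∈ s, a i • x i‖

/-- A basic sequence: nonzero vectors whose partial-sum projections are uniformly bounded,
i.e. a Schauder basis of its closed linear span. -/
def IsBasicSeq {E : Type*} [NormedAddCommGroup E] [NormedSpace ℝ E] (x : ℕ → E) : Prop :=
  (∀ n, x n ≠ 0) ∧
  ∃ K : ℝ, 1 ≤ K ∧ ∀ (a : ℕ → ℝ) (m n : ℕ), m ≤ n →
    ‖∑ i ∈ Finset.range m, a i • x i‖ ≤ K * ‖∑ i ∈ Finset.range n, a i • x i‖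

/-- An unconditional basic sequence. -/
def IsUnconditionalSeq {E : Type*} [NormedAddCommGroup E] [NormedSpace ℝ E]
    (x : ℕ → E) : Prop :=
  IsBasicSeq x ∧
  ∃ K : ℝ, 0 < K ∧ ∀ (s : Finset ℕ) (a ε : ℕ → ℝ), (∀ i, ε i = 1 ∨ ε i = -1) →
    ‖∑ i ∈ s, (ε i * a i) • x i‖ ≤ K * ‖∑ i ∈ s, a i • x i‖

/-- A `C`-subsymmetric sequence: an unconditional basic sequence that is `C`-equivalent
to each of its subsequences. -/
def IsSubsymmetric {E : Type*} [NormedAddCommGroup E] [NormedSpace ℝ E]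
    (C : ℝ) (x : ℕ → E) : Prop :=
  IsUnconditionalSeq x ∧ ∀ φ : ℕ → ℕ, StrictMono φ → SeqEquiv C x (x ∘ φ)

/-- A Schauder basis of `E`: biorthogonal system whose partial sums of the expansion of
every vector converge to that vector. -/
structure SchauderBasis' (E : Type*) [NormedAddCommGroup E] [NormedSpace ℝ E] where
  e : ℕ → E
  coord : ℕ → E →L[ℝ] ℝ
  biorth : ∀ i j, coord i (e j) = if i = j then (1 : ℝ) else 0
  expand : ∀ x : E,
    Filter.Tendsto (fun n => ∑ i ∈ Finset.range n, coord i x • e i) atTop (𝓝 x)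

/-- A block sequence with respect to a Schauder basis: nonzero, finitely supported
vectors with successive supports. -/
def IsBlockSeq {E : Type*} [NormedAddCommGroup E] [NormedSpace ℝ E]
    (b : SchauderBasis' E) (x : ℕ → E) : Prop :=
  (∀ n, x n ≠ 0) ∧
  (∀ n, (Function.support fun i => b.coord i (x n)).Finite) ∧
  ∀ m n, m < n → ∀ i ∈ Function.support (fun i => b.coord i (x m)),
    ∀ j ∈ Function.support (fun j => b.coord j (x n)), i < j

/-- A block subspace: the closed linear span of a block sequence. -/
def IsBlockSubspace {E : Type*} [NormedAddCommGroup E] [NormedSpace ℝ E]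
    (b : SchauderBasis' E) (M : Submodule ℝ E) : Prop :=
  ∃ x : ℕ → E, IsBlockSeq b x ∧ M = (Submodule.span ℝ (Set.range x)).topologicalClosure

/-- An infinite-dimensional closed subspace. -/
def InfDimClosed {E : Type*} [NormedAddCommGroup E] [NormedSpace ℝ E]
    (M : Submodule ℝ E) : Prop :=
  IsClosed (M : Set E) ∧ ¬ FiniteDimensional ℝ M

/-- The quasi-order on subspaces: `L ≤ M` iff `L ⊆ M + F` for some finite-dimensional `F`. -/
def SubspaceLE {E : Type*} [NormedAddCommGroup E] [NormedSpace ℝ E]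
    (L M : Submodule ℝ E) : Prop :=
  ∃ F : Submodule ℝ E, FiniteDimensional ℝ F ∧ L ≤ M ⊔ F

/-- The equivalence relation `≐` induced by the quasi-order `SubspaceLE`. -/
def SubspaceEquiv {E : Type*} [NormedAddCommGroup E] [NormedSpace ℝ E]
    (L M : Submodule ℝ E) : Prop :=
  SubspaceLE L M ∧ SubspaceLE M L

/-- Two normed spaces are `c`-isomorphic: a linear isomorphism with
`(1/c)‖v‖ ≤ ‖Tv‖ ≤ c‖v‖`. -/
def IsoWithConst (c : ℝ) (X Y : Type*) [NormedAddCommGroup X] [NormedSpace ℝ X]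
    [NormedAddCommGroup Y] [NormedSpace ℝ Y] : Prop :=
  ∃ T : X ≃ₗ[ℝ] Y, ∀ v : X, (1 / c) * ‖v‖ ≤ ‖T v‖ ∧ ‖T v‖ ≤ c * ‖v‖

/-- A `c`-minimal Banach space: every infinite-dimensional closed subspace contains a
further infinite-dimensional closed subspace `c`-isomorphic to the whole space. -/
def CMinimalSpace (c : ℝ) (X : Type*) [NormedAddCommGroup X] [NormedSpace ℝ X] : Prop :=
  ∀ L : Submodule ℝ X, InfDimClosed L →
    ∃ N : Submodule ℝ X, N ≤ L ∧ InfDimClosed N ∧ IsoWithConst c ↥N X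

/-- A minimal Banach space: every infinite-dimensional closed subspace contains a
further infinite-dimensional closed subspace isomorphic to the whole space. -/
def MinimalSpace (X : Type*) [NormedAddCommGroup X] [NormedSpace ℝ X] : Prop :=
  ∀ L : Submodule ℝ X, InfDimClosed L →
    ∃ N : Submodule ℝ X, N ≤ L ∧ InfDimClosed N ∧ Nonempty (↥N ≃L[ℝ] X)

/-!
Pass to a subsequence of the `C`-subsymmetric sequence `x` along which every basis coordinate
converges. Differences `x B - x A` of late terms then have small coordinates on any given initial
segment, so one can choose `A₀ < B₀ < A₁ < B₁ < ⋯` such that `v n = x Bₙ - x Aₙ` is a summably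
small perturbation of a block sequence `y`. If each chosen index exceeds twice the previous one,
the indices of any subsequence of pairs are the image of all indices under a strictly increasing
map of `ℕ`; so `v` is `C`-equivalent to its subsequences through a single subsequence of `x`, and
is again `C`-subsymmetric. The principle of small perturbations then makes `y`
`(C + δ)`-subsymmetric.
-/

open Finset

def pairDiff {G : Type*} [Sub G] (z : ℕ → G) (n : ℕ) : G := z (2 * n + 1) - z (2 * n)

def pairLift (ψ : ℕ → ℕ) (k : ℕ) : ℕ := 2 * ψ (k / 2) + k % 2

lemma StrictMono.pairLift {ψ : ℕ → ℕ} (hψ : StrictMono ψ) : StrictMono (pairLift ψ) := by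
  refine strictMono_nat_of_lt_succ fun k => ?_
  obtain ⟨i, rfl | rfl⟩ := Nat.even_or_odd' k
  · have h₁ : (2 * i + 1) / 2 = i := by omega
    simp [_root_.pairLift, h₁]
  · have h₁ : (2 * i + 1) / 2 = i := by omega
    have h₂ : (2 * i + 1 + 1) / 2 = i + 1 := by omega
    have := hψ (show i < i + 1 by omega)
    show 2 * ψ ((2 * i + 1) / 2) + (2 * i + 1) % 2
      < 2 * ψ ((2 * i + 1 + 1) / 2) + (2 * i + 1 + 1) % 2
    rw [h₁, h₂]
    omega

lemma pairDiff_comp_pairLift {G : Type*} [Sub G] (z : ℕ → G) (ψ : ℕ → ℕ) :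
    pairDiff (z ∘ pairLift ψ) = pairDiff z ∘ ψ := by
  ext n
  have h₁ : (2 * n + 1) / 2 = n := by omega
  simp [pairDiff, pairLift, h₁]

/-- `θ n = n + (q k - p k)` for `p k ≤ n < p (k + 1)`; the gap condition makes the shift
`q k - p k` nondecreasing. -/
lemma exists_strictMono_comp_eq {p q : ℕ → ℕ} (hp : StrictMono p) (h₀ : p 0 ≤ q 0)
    (hgap : ∀ k, p (k + 1) + q k ≤ q (k + 1) + p k) :
    ∃ θ : ℕ → ℕ, StrictMono θ ∧ θ ∘ p = q := by
  classical
  have hpq : ∀ k, p k ≤ q k := fun k => by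
    induction k with
    | zero => exact h₀
    | succ k ih => have := hgap k; omega
  have hd : Monotone fun k => q k - p k := monotone_nat_of_le_succ fun k => by
    have := hgap k
    have := hpq k
    omega
  set K : ℕ → ℕ := fun n => Nat.findGreatest (fun k => p k ≤ n) n
  have hK : Monotone K := fun m n hmn => Nat.findGreatest_mono (fun k hk => hk.trans hmn) hmn
  have hKp : ∀ k, K (p k) = k := fun k =>
    le_antisymm (hp.le_iff_le.mp (Nat.findGreatest_spec (P := (p · ≤ p k)) (hp.id_le k) le_rfl))
      (Nat.le_findGreatest (P := (p · ≤ p k)) (hp.id_le k) le_rfl)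
  refine ⟨fun n => n + (q (K n) - p (K n)), strictMono_nat_of_lt_succ fun n => ?_,
    funext fun k => ?_⟩
  · have := hd (hK (show n ≤ n + 1 by omega))
    dsimp only at this ⊢
    omega
  · have := hpq k
    simp only [Function.comp_apply, hKp]
    omega

lemma strictMono_of_two_mul_lt {u : ℕ → ℕ} (hu : ∀ k, 2 * u k < u (k + 1)) : StrictMono u :=
  strictMono_nat_of_lt_succ fun k => by have := hu k; omega

lemma exists_strictMono_comp_eq_comp {u σ : ℕ → ℕ} (hu : ∀ k, 2 * u k < u (k + 1))
    (hσ : StrictMono σ) : ∃ θ : ℕ → ℕ, StrictMono θ ∧ θ ∘ u = u ∘ σ := by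
  have hu' := strictMono_of_two_mul_lt hu
  refine exists_strictMono_comp_eq hu' (hu'.monotone (hσ.id_le 0)) fun k => ?_
  have h₁ : u (σ k + 1) ≤ u (σ (k + 1)) := hu'.monotone (hσ k.lt_succ_self)
  simp only [Function.comp_apply]
  rcases (hσ.id_le k).eq_or_lt with h | h
  · have hk : σ k = k := h.symm
    rw [hk] at h₁ ⊢
    omega
  · have h₂ : u (k + 1) ≤ u (σ k) := hu'.monotone h
    have := hu (σ k)
    omega

lemma exists_seq_forall_rel {α : Type*} [Nonempty α] {R : ℕ → α → α → Prop}
    (h : ∀ n a, ∃ a', R n a a') : ∃ f : ℕ → α, ∀ n, R n (f n) (f (n + 1)) := by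
  choose g hg using h
  exact ⟨fun n => Nat.rec (Classical.arbitrary α) g n, fun n => hg n _⟩

section Sequences

variable {E F G : Type*} [NormedAddCommGroup E] [NormedSpace ℝ E]
  [NormedAddCommGroup F] [NormedSpace ℝ F] [NormedAddCommGroup G] [NormedSpace ℝ G]

lemma sum_smul_eq_sum_range_ite {s : Finset ℕ} {N : ℕ} (hs : s ⊆ range N) (a : ℕ → ℝ)
    (z : ℕ → E) :
    ∑ i ∈ s, a i • z i = ∑ i ∈ range N, (if i ∈ s then a i else 0) • z i := by
  simp only [ite_smul, zero_smul]
  rw [sum_ite_mem, inter_eq_right.mpr hs]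

lemma sum_image_smul_extend {u : ℕ → ℕ} (hu : u.Injective) (s : Finset ℕ) (a : ℕ → ℝ)
    (z : ℕ → E) :
    ∑ j ∈ s.image u, u.extend a 0 j • z j = ∑ i ∈ s, a i • z (u i) := by
  rw [sum_image hu.injOn]
  simp only [hu.extend_apply]

lemma sum_range_smul_extend {u : ℕ → ℕ} (hu : StrictMono u) (m : ℕ) (a : ℕ → ℝ)
    (z : ℕ → E) :
    ∑ j ∈ range (u m), u.extend a 0 j • z j = ∑ i ∈ range m, a i • z (u i) := by
  rw [← sum_image_smul_extend hu.injective]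
  symm
  refine sum_subset (fun j hj => ?_) fun j hjm hj => ?_
  · obtain ⟨i, hi, rfl⟩ := mem_image.mp hj
    exact mem_range.mpr (hu (mem_range.mp hi))
  · have hj' : ¬∃ i, u i = j := by
      rintro ⟨i, rfl⟩
      exact hj (mem_image_of_mem u (mem_range.mpr (hu.lt_iff_lt.mp (mem_range.mp hjm))))
    rw [Function.extend_apply' _ _ _ hj', Pi.zero_apply, zero_smul]

def pairCoeff (a : ℕ → ℝ) (k : ℕ) : ℝ := if k % 2 = 0 then -a (k / 2) else a (k / 2)

lemma pairCoeff_two_mul (a : ℕ → ℝ) (i : ℕ) : pairCoeff a (2 * i) = -a i := by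
  simp [pairCoeff]

lemma pairCoeff_two_mul_add_one (a : ℕ → ℝ) (i : ℕ) : pairCoeff a (2 * i + 1) = a i := by
  simp only [pairCoeff, Nat.mul_add_mod, Nat.one_mod, one_ne_zero, if_false]
  congr
  omega

lemma sum_range_smul_pairDiff (z : ℕ → E) (a : ℕ → ℝ) (N : ℕ) :
    ∑ i ∈ range N, a i • pairDiff z i = ∑ k ∈ range (2 * N), pairCoeff a k • z k := by
  induction N with
  | zero => simp
  | succ N ih =>
    rw [sum_range_succ, ih, Nat.mul_succ, sum_range_succ, sum_range_succ,
      pairCoeff_two_mul, pairCoeff_two_mul_add_one, pairDiff, smul_sub, neg_smul]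
    abel

lemma seqEquiv_of_forall_range {c : ℝ} {x : ℕ → E} {y : ℕ → F}
    (h : ∀ (N : ℕ) (a : ℕ → ℝ),
      (1 / c) * ‖∑ i ∈ range N, a i • x i‖ ≤ ‖∑ i ∈ range N, a i • y i‖ ∧
      ‖∑ i ∈ range N, a i • y i‖ ≤ c * ‖∑ i ∈ range N, a i • x i‖) :
    SeqEquiv c x y := by
  intro s a
  obtain ⟨N, hN⟩ := s.exists_nat_subset_range
  rw [sum_smul_eq_sum_range_ite hN a x, sum_smul_eq_sum_range_ite hN a y]
  exact h N _

namespace SeqEquiv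

variable {c c' : ℝ} {x : ℕ → E} {y : ℕ → F} {z : ℕ → G}

lemma norm_apply_le (h : SeqEquiv c x y) (n : ℕ) : ‖y n‖ ≤ c * ‖x n‖ := by
  simpa using (h {n} 1).2

lemma symm (h : SeqEquiv c x y) (hc : 0 < c) : SeqEquiv c y x := fun s a => by
  obtain ⟨h₁, h₂⟩ := h s a
  rw [one_div, inv_mul_le_iff₀ hc] at h₁ ⊢
  exact ⟨h₂, h₁⟩

lemma trans (h : SeqEquiv c x y) (h' : SeqEquiv c' y z) (hc' : 0 ≤ c') :
    SeqEquiv (c * c') x z := fun s a => by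
  obtain ⟨h₁, h₂⟩ := h s a
  obtain ⟨h₁', h₂'⟩ := h' s a
  constructor
  · calc 1 / (c * c') * ‖∑ i ∈ s, a i • x i‖ = 1 / c' * (1 / c * ‖∑ i ∈ s, a i • x i‖) := by
          rw [← mul_assoc, one_div_mul_one_div_rev, mul_comm c]
      _ ≤ 1 / c' * ‖∑ i ∈ s, a i • y i‖ := by gcongr
      _ ≤ _ := h₁'
  · calc ‖∑ i ∈ s, a i • z i‖ ≤ c' * (c * ‖∑ i ∈ s, a i • x i‖) := h₂'.trans (by gcongr)
      _ = c * c' * ‖∑ i ∈ s, a i • x i‖ := by ring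

lemma mono (h : SeqEquiv c x y) (hc : 0 < c) (hcc' : c ≤ c') : SeqEquiv c' x y := fun s a => by
  obtain ⟨h₁, h₂⟩ := h s a
  exact ⟨(mul_le_mul_of_nonneg_right (one_div_le_one_div_of_le hc hcc') (norm_nonneg _)).trans h₁,
    h₂.trans (mul_le_mul_of_nonneg_right hcc' (norm_nonneg _))⟩

lemma comp (h : SeqEquiv c x y) {u : ℕ → ℕ} (hu : u.Injective) : SeqEquiv c (x ∘ u) (y ∘ u) :=
  fun s a => by
  simpa only [Function.comp_apply, sum_image_smul_extend hu] using h (s.image u) (u.extend a 0)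

lemma pairDiff {v : ℕ → E} {w : ℕ → F} (h : SeqEquiv c v w) :
    SeqEquiv c (_root_.pairDiff v) (_root_.pairDiff w) :=
  seqEquiv_of_forall_range fun N a => by
    simpa only [sum_range_smul_pairDiff] using h (range (2 * N)) (pairCoeff a)

end SeqEquiv

def IsBasicWith (K : ℝ) (x : ℕ → E) : Prop :=
  ∀ (a : ℕ → ℝ) (m n : ℕ), m ≤ n →
    ‖∑ i ∈ range m, a i • x i‖ ≤ K * ‖∑ i ∈ range n, a i • x i‖

namespace IsBasicWith

variable {K : ℝ} {x z : ℕ → E}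

lemma abs_mul_norm_le (hK : IsBasicWith K x) (a : ℕ → ℝ) {j N : ℕ} (hj : j < N) :
    |a j| * ‖x j‖ ≤ 2 * K * ‖∑ i ∈ range N, a i • x i‖ := by
  have h₁ := hK a (j + 1) N hj
  have h₂ := hK a j N hj.le
  calc |a j| * ‖x j‖ = ‖(∑ i ∈ range (j + 1), a i • x i) - ∑ i ∈ range j, a i • x i‖ := by
        rw [sum_range_succ, add_sub_cancel_left, norm_smul, Real.norm_eq_abs]
    _ ≤ ‖∑ i ∈ range (j + 1), a i • x i‖ + ‖∑ i ∈ range j, a i • x i‖ := norm_sub_le _ _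
    _ ≤ 2 * K * ‖∑ i ∈ range N, a i • x i‖ := by linarith

lemma comp (hK : IsBasicWith K x) {u : ℕ → ℕ} (hu : StrictMono u) : IsBasicWith K (x ∘ u) :=
  fun a m n hmn => by
  simpa only [Function.comp_apply, sum_range_smul_extend hu] using
    hK (u.extend a 0) (u m) (u n) (hu.monotone hmn)

lemma pairDiff (hK : IsBasicWith K z) : IsBasicWith K (pairDiff z) := fun a m n hmn => by
  simpa only [sum_range_smul_pairDiff] using hK (pairCoeff a) (2 * m) (2 * n) (by omega)

lemma abs_mul_norm_le_pairDiff (hK : IsBasicWith K z) (a : ℕ → ℝ) {i N : ℕ} (hi : i < N) :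
    |a i| * ‖z (2 * i + 1)‖ ≤ 2 * K * ‖∑ i ∈ range N, a i • _root_.pairDiff z i‖ := by
  simpa only [sum_range_smul_pairDiff, pairCoeff_two_mul_add_one] using
    hK.abs_mul_norm_le (pairCoeff a) (show 2 * i + 1 < 2 * N by omega)

end IsBasicWith

namespace IsBasicSeq

variable {x z : ℕ → E}

lemma comp (hx : IsBasicSeq x) {u : ℕ → ℕ} (hu : StrictMono u) : IsBasicSeq (x ∘ u) :=
  let ⟨hx₀, K, hK₁, hK⟩ := hx
  ⟨fun n => hx₀ (u n), K, hK₁, IsBasicWith.comp hK hu⟩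

lemma pairDiff (hz : IsBasicSeq z) : IsBasicSeq (pairDiff z) := by
  obtain ⟨hz₀, K, hK₁, hK⟩ := hz
  refine ⟨fun n hn => hz₀ (2 * n + 1) ?_, K, hK₁, IsBasicWith.pairDiff hK⟩
  simpa [ite_smul, hn] using
    IsBasicWith.abs_mul_norm_le_pairDiff hK (fun i => if i = n then 1 else 0) n.lt_succ_self

lemma of_seqEquiv (hx : IsBasicSeq x) {c : ℝ} {y : ℕ → F} (h : SeqEquiv c x y) (hc : 1 ≤ c) :
    IsBasicSeq y := by
  obtain ⟨hx₀, K, hK₁, hK⟩ := hx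
  have hyx := h.symm (by linarith)
  refine ⟨fun n hn => hx₀ n ?_, c * K * c, ?_, fun a m n hmn => ?_⟩
  · simpa [hn] using hyx.norm_apply_le n
  · exact one_le_mul_of_one_le_of_one_le (one_le_mul_of_one_le_of_one_le hc hK₁) hc
  · calc ‖∑ i ∈ range m, a i • y i‖ ≤ c * ‖∑ i ∈ range m, a i • x i‖ := (h _ a).2
      _ ≤ c * (K * ‖∑ i ∈ range n, a i • x i‖) :=
          mul_le_mul_of_nonneg_left (hK a m n hmn) (by linarith)
      _ ≤ c * (K * (c * ‖∑ i ∈ range n, a i • y i‖)) :=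
          mul_le_mul_of_nonneg_left (mul_le_mul_of_nonneg_left (hyx _ a).2 (by linarith))
            (by linarith)
      _ = c * K * c * ‖∑ i ∈ range n, a i • y i‖ := by ring

end IsBasicSeq

namespace IsUnconditionalSeq

variable {x z : ℕ → E}

lemma comp (hx : IsUnconditionalSeq x) {u : ℕ → ℕ} (hu : StrictMono u) :
    IsUnconditionalSeq (x ∘ u) := by
  obtain ⟨hb, K, hK, hunc⟩ := hx
  refine ⟨hb.comp hu, K, hK, fun s a ε hε => ?_⟩
  have hε' : ∀ j, u.extend ε 1 j = 1 ∨ u.extend ε 1 j = -1 := fun j => by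
    by_cases hj : ∃ i, u i = j
    · obtain ⟨i, rfl⟩ := hj
      rw [hu.injective.extend_apply]
      exact hε i
    · simp [Function.extend_apply' _ _ _ hj]
  have := hunc (s.image u) (u.extend a 0) (u.extend ε 1) hε'
  rw [sum_image hu.injective.injOn, sum_image hu.injective.injOn] at this
  simpa only [Function.comp_apply, hu.injective.extend_apply] using this

lemma pairDiff (hz : IsUnconditionalSeq z) : IsUnconditionalSeq (pairDiff z) := by
  obtain ⟨hb, K, hK, hunc⟩ := hz
  refine ⟨hb.pairDiff, K, hK, fun s a ε hε => ?_⟩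
  obtain ⟨N, hN⟩ := s.exists_nat_subset_range
  rw [sum_smul_eq_sum_range_ite hN, sum_smul_eq_sum_range_ite hN, sum_range_smul_pairDiff,
    sum_range_smul_pairDiff]
  convert hunc (range (2 * N)) (pairCoeff fun i => if i ∈ s then a i else 0)
    (fun k => ε (k / 2)) (fun k => hε _) using 5 with k
  by_cases hk : k / 2 ∈ s <;> simp [pairCoeff, hk]

lemma of_seqEquiv (hx : IsUnconditionalSeq x) {c : ℝ} {y : ℕ → F} (h : SeqEquiv c x y)
    (hc : 1 ≤ c) : IsUnconditionalSeq y := by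
  obtain ⟨hb, K, hK, hunc⟩ := hx
  have hyx := h.symm (by linarith)
  refine ⟨hb.of_seqEquiv h hc, c * K * c, by positivity, fun s a ε hε => ?_⟩
  calc ‖∑ i ∈ s, (ε i * a i) • y i‖ ≤ c * ‖∑ i ∈ s, (ε i * a i) • x i‖ := (h _ _).2
    _ ≤ c * (K * ‖∑ i ∈ s, a i • x i‖) := mul_le_mul_of_nonneg_left (hunc s a ε hε) (by linarith)
    _ ≤ c * (K * (c * ‖∑ i ∈ s, a i • y i‖)) :=
        mul_le_mul_of_nonneg_left (mul_le_mul_of_nonneg_left (hyx _ a).2 hK.le) (by linarith)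
    _ = c * K * c * ‖∑ i ∈ s, a i • y i‖ := by ring

end IsUnconditionalSeq

namespace IsSubsymmetric

variable {C : ℝ} {x : ℕ → E}

lemma norm_le (hx : IsSubsymmetric C x) (n : ℕ) : ‖x n‖ ≤ C * ‖x 0‖ := by
  simpa using (hx.2 (· + n) (strictMono_id.add_const n)).norm_apply_le 0

lemma norm_zero_le (hx : IsSubsymmetric C x) (hC : 0 < C) (n : ℕ) : ‖x 0‖ ≤ C * ‖x n‖ := by
  simpa using ((hx.2 (· + n) (strictMono_id.add_const n)).symm hC).norm_apply_le 0

lemma mono (hx : IsSubsymmetric C x) (hC : 0 < C) {C' : ℝ} (h : C ≤ C') :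
    IsSubsymmetric C' x :=
  ⟨hx.1, fun φ hφ => (hx.2 φ hφ).mono hC h⟩

lemma of_seqEquiv (hx : IsSubsymmetric C x) (hC : 0 ≤ C) {c : ℝ} {y : ℕ → F}
    (h : SeqEquiv c x y) (hc : 1 ≤ c) : IsSubsymmetric (c * C * c) y :=
  ⟨hx.1.of_seqEquiv h hc, fun φ hφ =>
    ((h.symm (by linarith)).trans (hx.2 φ hφ) hC).trans (h.comp hφ.injective) (by linarith)⟩

lemma pairDiff_comp (hx : IsSubsymmetric C x) {u : ℕ → ℕ} (hu : ∀ k, 2 * u k < u (k + 1)) :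
    IsSubsymmetric C (pairDiff (x ∘ u)) := by
  have hu' := strictMono_of_two_mul_lt hu
  refine ⟨(hx.1.comp hu').pairDiff, fun ψ hψ => ?_⟩
  obtain ⟨θ, hθ, hθu⟩ := exists_strictMono_comp_eq_comp hu hψ.pairLift
  rw [← pairDiff_comp_pairLift, Function.comp_assoc, ← hθu, ← Function.comp_assoc]
  exact ((hx.2 θ hθ).comp hu'.injective).pairDiff

lemma exists_abs_le_pairDiff (hx : IsSubsymmetric C x) (hC : 0 < C) :
    ∃ L > 0, ∀ u : ℕ → ℕ, StrictMono u → ∀ (N : ℕ) (a : ℕ → ℝ) (i : ℕ), i < N →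
      |a i| ≤ L * ‖∑ i ∈ range N, a i • pairDiff (x ∘ u) i‖ := by
  obtain ⟨hx₀, K, hK₁, hK⟩ := hx.1.1
  have hx₀' : 0 < ‖x 0‖ := norm_pos_iff.mpr (hx₀ 0)
  refine ⟨2 * K * C / ‖x 0‖, by positivity, fun u hu N a i hi => ?_⟩
  have h₁ := (IsBasicWith.comp hK hu).abs_mul_norm_le_pairDiff a hi
  rw [Function.comp_apply] at h₁
  have h₂ := hx.norm_zero_le hC (u (2 * i + 1))
  rw [div_mul_eq_mul_div, le_div_iff₀ hx₀']
  nlinarith [mul_le_mul_of_nonneg_left h₂ (abs_nonneg (a i)), mul_le_mul_of_nonneg_left h₁ hC.le]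

end IsSubsymmetric

lemma seqEquiv_of_norm_sub_le {v y : ℕ → E} {L η : ℝ} {ε : ℕ → ℝ} (hL : 0 ≤ L)
    (hcoef : ∀ (N : ℕ) (a : ℕ → ℝ) (i : ℕ), i < N → |a i| ≤ L * ‖∑ i ∈ range N, a i • v i‖)
    (hclose : ∀ n, ‖y n - v n‖ ≤ ε n) (hε : ∀ N, ∑ i ∈ range N, ε i ≤ η) (hLη : L * η < 1) :
    SeqEquiv (1 - L * η)⁻¹ v y := by
  refine seqEquiv_of_forall_range fun N a => ?_
  set S := ‖∑ i ∈ range N, a i • v i‖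
  have hdiff : ‖∑ i ∈ range N, a i • y i - ∑ i ∈ range N, a i • v i‖ ≤ L * η * S :=
    calc ‖∑ i ∈ range N, a i • y i - ∑ i ∈ range N, a i • v i‖
        = ‖∑ i ∈ range N, a i • (y i - v i)‖ := by simp only [smul_sub, sum_sub_distrib]
      _ ≤ ∑ i ∈ range N, |a i| * ‖y i - v i‖ := by
          simpa only [norm_smul, Real.norm_eq_abs] using
            norm_sum_le (range N) fun i => a i • (y i - v i)
      _ ≤ ∑ i ∈ range N, L * S * ε i := sum_le_sum fun i hi =>
          mul_le_mul (hcoef N a i (mem_range.mp hi)) (hclose i) (norm_nonneg _)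
            (by positivity)
      _ ≤ L * S * η := by rw [← mul_sum]; exact mul_le_mul_of_nonneg_left (hε N) (by positivity)
      _ = L * η * S := by ring
  have hS := norm_nonneg (∑ i ∈ range N, a i • v i)
  have hsub := norm_sub_norm_le (∑ i ∈ range N, a i • y i) (∑ i ∈ range N, a i • v i)
  have hsub' := norm_sub_norm_le (∑ i ∈ range N, a i • v i) (∑ i ∈ range N, a i • y i)
  rw [norm_sub_rev] at hsub'
  rw [one_div, inv_inv, ← div_eq_inv_mul, le_div_iff₀ (by linarith)]
  constructor <;> nlinarith [sq_nonneg (L * η)]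

end Sequences

namespace SchauderBasis'

variable {E : Type*} [NormedAddCommGroup E] [NormedSpace ℝ E] (b : SchauderBasis' E)

noncomputable def proj (I : Finset ℕ) : E →L[ℝ] E := ∑ i ∈ I, (b.coord i).smulRight (b.e i)

lemma proj_apply (I : Finset ℕ) (x : E) : b.proj I x = ∑ i ∈ I, b.coord i x • b.e i := by
  simp [proj]

lemma coord_proj (I : Finset ℕ) (x : E) (j : ℕ) :
    b.coord j (b.proj I x) = if j ∈ I then b.coord j x else 0 := by
  simp [proj_apply, b.biorth]

lemma proj_Ico {m n : ℕ} (h : m ≤ n) : b.proj (Ico m n) = b.proj (range n) - b.proj (range m) :=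
  sum_Ico_eq_sub _ h

lemma tendsto_proj_range (x : E) : Tendsto (fun n => b.proj (range n) x) atTop (𝓝 x) := by
  simpa only [proj_apply] using b.expand x

lemma isBlockSeq_proj_Ico {Q : ℕ → ℕ} (hQ : Monotone Q) {w : ℕ → E}
    (hw : ∀ n, b.proj (Ico (Q n) (Q (n + 1))) (w n) ≠ 0) :
    IsBlockSeq b fun n => b.proj (Ico (Q n) (Q (n + 1))) (w n) := by
  have hsupp : ∀ n, (Function.support fun i => b.coord i (b.proj (Ico (Q n) (Q (n + 1))) (w n)))
      ⊆ Ico (Q n) (Q (n + 1)) := fun n i hi => by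
    by_contra h
    exact hi (by simp only [coord_proj, if_neg (mem_coe.not.mp h)])
  refine ⟨hw, fun n => (finite_toSet _).subset (hsupp n), fun m n hmn i hi j hj => ?_⟩
  have hi' := mem_Ico.mp (hsupp m hi)
  have hj' := mem_Ico.mp (hsupp n hj)
  have := hQ (show m + 1 ≤ n by omega)
  omega

lemma exists_strictMono_cauchySeq_proj {x : ℕ → E} {R : ℝ} (hx : ∀ n, ‖x n‖ ≤ R) :
    ∃ ρ : ℕ → ℕ, StrictMono ρ ∧ ∀ q, CauchySeq fun n => b.proj (range q) (x (ρ n)) := by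
  have hbound : ∀ n i, b.coord i (x n) ∈ Set.Icc (-(‖b.coord i‖ * R)) (‖b.coord i‖ * R) :=
    fun n i => abs_le.mp <| ((b.coord i).le_opNorm (x n)).trans <|
      mul_le_mul_of_nonneg_left (hx n) (norm_nonneg _)
  obtain ⟨g, -, ρ, hρ, hg⟩ := (isCompact_univ_pi fun i => isCompact_Icc).tendsto_subseq
    (x := fun n i => b.coord i (x n)) fun n => Set.mem_univ_pi.mpr (hbound n)
  refine ⟨ρ, hρ, fun q => Tendsto.cauchySeq (x := ∑ i ∈ range q, g i • b.e i) ?_⟩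
  simp only [proj_apply]
  exact tendsto_finsetSum _ fun i _ => ((tendsto_pi_nhds.mp hg) i).smul_const _

lemma exists_sub_near_proj_Ico {x : ℕ → E} {ρ : ℕ → ℕ} (hρ : StrictMono ρ)
    (hx : ∀ q, CauchySeq fun n => b.proj (range q) (x (ρ n))) (B q : ℕ) {η : ℝ} (hη : 0 < η) :
    ∃ A B' q', 2 * B < A ∧ 2 * A < B' ∧ q < q' ∧
      ‖b.proj (Ico q q') (x B' - x A) - (x B' - x A)‖ ≤ η := by
  obtain ⟨M, hM⟩ := Metric.cauchySeq_iff.mp (hx q) (η / 2) (half_pos hη)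
  set s := max M (2 * B + 1)
  set t := max M (2 * ρ s + 1)
  have hs : 2 * B < ρ s := (le_max_right M _).trans (hρ.id_le s)
  have ht : 2 * ρ s < ρ t := (le_max_right M _).trans (hρ.id_le t)
  have hhead : ‖b.proj (range q) (x (ρ t) - x (ρ s))‖ < η / 2 := by
    rw [map_sub, ← dist_eq_norm]
    exact hM t (le_max_left _ _) s (le_max_left _ _)
  obtain ⟨q', htail, hq'⟩ := (((b.tendsto_proj_range (x (ρ t) - x (ρ s))).eventually
    (Metric.ball_mem_nhds _ (half_pos hη))).and (eventually_gt_atTop q)).exists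
  refine ⟨ρ s, ρ t, q', hs, ht, hq', ?_⟩
  rw [dist_eq_norm] at htail
  rw [b.proj_Ico hq'.le, sub_apply, sub_right_comm]
  linarith [norm_sub_le (b.proj (range q') (x (ρ t) - x (ρ s)) - (x (ρ t) - x (ρ s)))
    (b.proj (range q) (x (ρ t) - x (ρ s)))]

lemma exists_pairDiff_near_proj_Ico {x : ℕ → E} {R : ℝ} (hx : ∀ n, ‖x n‖ ≤ R) {ε : ℕ → ℝ}
    (hε : ∀ n, 0 < ε n) :
    ∃ u Q : ℕ → ℕ, (∀ k, 2 * u k < u (k + 1)) ∧ Monotone Q ∧ ∀ n,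
      ‖b.proj (Ico (Q n) (Q (n + 1))) (pairDiff (x ∘ u) n) - pairDiff (x ∘ u) n‖ ≤ ε n := by
  obtain ⟨ρ, hρ, hcauchy⟩ := b.exists_strictMono_cauchySeq_proj hx
  -- a state `(A, B, q)` records the pair `(A, B)` chosen last and the end `q` of its block
  obtain ⟨f, hf⟩ := exists_seq_forall_rel (α := ℕ × ℕ × ℕ)
    (R := fun n s s' => 2 * s.2.1 < s'.1 ∧ 2 * s'.1 < s'.2.1 ∧ s.2.2 < s'.2.2 ∧
      ‖b.proj (Ico s.2.2 s'.2.2) (x s'.2.1 - x s'.1) - (x s'.2.1 - x s'.1)‖ ≤ ε n)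
    fun n s => by
      obtain ⟨A, B', q', h⟩ := b.exists_sub_near_proj_Ico hρ hcauchy s.2.1 s.2.2 (hε n)
      exact ⟨(A, B', q'), h⟩
  set u : ℕ → ℕ := fun k => if k % 2 = 0 then (f (k / 2 + 1)).1 else (f (k / 2 + 1)).2.1
  have hu_even : ∀ i, u (2 * i) = (f (i + 1)).1 := fun i => by simp [u]
  have hu_odd : ∀ i, u (2 * i + 1) = (f (i + 1)).2.1 := fun i => by
    have h : (2 * i + 1) / 2 = i := by omega
    simp [u, h]
  refine ⟨u, fun n => (f n).2.2, fun k => ?_, monotone_nat_of_le_succ fun n => (hf n).2.2.1.le,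
    fun n => ?_⟩
  · obtain ⟨i, rfl | rfl⟩ := Nat.even_or_odd' k
    · rw [hu_even, hu_odd]
      exact (hf i).2.1
    · rw [hu_odd, show 2 * i + 1 + 1 = 2 * (i + 1) by ring, hu_even]
      exact (hf (i + 1)).1
  · simpa only [pairDiff, Function.comp_apply, hu_even, hu_odd] using (hf n).2.2.2

end SchauderBasis'

theorem subsymmetric_block_sequence_general
    {E : Type*} [NormedAddCommGroup E] [NormedSpace ℝ E]
    (b : SchauderBasis' E)
    (C : ℝ) (hC : 1 ≤ C)
    (hsub : ∃ x : ℕ → E, IsSubsymmetric C x)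
    (δ : ℝ) (hδ : 0 < δ) :
    ∃ y : ℕ → E, IsBlockSeq b y ∧ IsSubsymmetric (C + δ) y := by
  obtain ⟨x, hx⟩ := hsub
  obtain ⟨L, hL, hcoef⟩ := hx.exists_abs_le_pairDiff (by linarith)
  -- `(1 - t) ^ 2 ≥ 1 - 2 * t = C / (C + δ)`
  set t := δ / (2 * (C + δ))
  have ht : 0 < t := by positivity
  have ht₁ : t < 1 := by rw [div_lt_one (by positivity)]; linarith
  have hconst : (1 - t)⁻¹ * C * (1 - t)⁻¹ ≤ C + δ := by
    have ht' : t * (2 * (C + δ)) = δ := div_mul_cancel₀ _ (by positivity)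
    rw [← div_eq_inv_mul, div_mul_eq_mul_div, div_le_iff₀ (by linarith), ← div_eq_mul_inv,
      div_le_iff₀ (by linarith)]
    nlinarith
  obtain ⟨u, Q, hu, hQ, hnear⟩ := b.exists_pairDiff_near_proj_Ico hx.norm_le
    (ε := fun n => t / L / 2 * (1 / 2) ^ n) fun n => by positivity
  have hLt : L * (t / L) = t := mul_div_cancel₀ _ hL.ne'
  have hvy := seqEquiv_of_norm_sub_le hL.le (hcoef u (strictMono_of_two_mul_lt hu)) hnear
    (fun N => by rw [← mul_sum]; nlinarith [sum_geometric_two_le N]) (hLt ▸ ht₁)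
  rw [hLt] at hvy
  have hy := (hx.pairDiff_comp hu).of_seqEquiv (by linarith) hvy
    ((one_le_inv₀ (by linarith)).mpr (by linarith))
  exact ⟨_, b.isBlockSeq_proj_Ico hQ hy.1.1.1, hy.mono (by positivity) hconst⟩

/-- If a Banach space with a Schauder basis contains a `C`-subsymmetric
sequence (`C ≥ 1`), then for every `δ > 0` it contains a `(C+δ)`-subsymmetric block
sequence. -/
theorem subsymmetric_block_sequence
    {E : Type*} [NormedAddCommGroup E] [NormedSpace ℝ E] [CompleteSpace E]
    (b : SchauderBasis' E)
    (C : ℝ) (hC : 1 ≤ C)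
    (hsub : ∃ x : ℕ → E, IsSubsymmetric C x)
    (δ : ℝ) (hδ : 0 < δ) :
    ∃ y : ℕ → E, IsBlockSeq b y ∧ IsSubsymmetric (C + δ) y :=
  subsymmetric_block_sequence_general b C hC hsub δ hδ
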